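/- Let N be a finite index set, and for i,j ∈ N let F_{ij} ∈ ℝ with F_{ij} ≥ 0 for i ≠ j. Let (v_i)_{i∈N} and (w_i)_{i∈N} be vectors with v_i > 0, w_i > 0 for all i. Suppose that for every i, F_{ii} v_i + ∑_{j≠i} F_{ij} v_j < 0, and that F w = χ w for some real χ. Then χ < 0. -/

import Mathlib

/-!
Pick `i` maximizing `w i / v i` and put `t = w i / v i > 0`, so that `w ≤ t • v` with equality at
`i`. Since the off-diagonal entries of row `i` are nonnegative, `χ * w i = (F w) i ≤ t * (F v) i < 0`.
-/

open Finset

theorem exists_forall_le_div_mul {N : Type*} [Finite N] [Nonempty N] {v : N → ℝ}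
    (hv : ∀ i, 0 < v i) (w : N → ℝ) : ∃ i, ∀ j, w j ≤ w i / v i * v j := by
  obtain ⟨i, hi⟩ := Finite.exists_max fun j => w j / v j
  exact ⟨i, fun j => (div_le_iff₀ (hv j)).mp (hi j)⟩

theorem sum_mul_le_sum_mul_of_le_of_eq {N : Type*} [Fintype N] {f x y : N → ℝ} {i : N}
    (hf : ∀ j, j ≠ i → 0 ≤ f j) (hxy : ∀ j, x j ≤ y j) (hi : x i = y i) :
    ∑ j, f j * x j ≤ ∑ j, f j * y j := by
  refine sum_le_sum fun j _ => ?_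
  rcases eq_or_ne j i with rfl | hji
  · rw [hi]
  · exact mul_le_mul_of_nonneg_left (hxy j) (hf j hji)

theorem stmt_6 {N : Type*} [Fintype N] [Nonempty N] [DecidableEq N]
    (F : N → N → ℝ) (hF : ∀ i j, i ≠ j → 0 ≤ F i j)
    (v w : N → ℝ) (hv : ∀ i, 0 < v i) (hw : ∀ i, 0 < w i)
    (hrow : ∀ i, F i i * v i + ∑ j ∈ Finset.univ.erase i, F i j * v j < 0)
    (χ : ℝ) (heig : ∀ i, ∑ j, F i j * w j = χ * w i) :
    χ < 0 := by
  obtain ⟨i, hi⟩ := exists_forall_le_div_mul hv w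
  set t := w i / v i
  have hFv : ∑ j, F i j * v j < 0 := by
    rw [← add_sum_erase _ _ (mem_univ i)]
    exact hrow i
  have hχw : χ * w i < 0 :=
    calc χ * w i = ∑ j, F i j * w j := (heig i).symm
      _ ≤ ∑ j, F i j * (t * v j) :=
        sum_mul_le_sum_mul_of_le_of_eq (fun j hj => hF i j hj.symm) hi
          (div_mul_cancel₀ _ (hv i).ne').symm
      _ = t * ∑ j, F i j * v j := by
        rw [mul_sum]
        exact sum_congr rfl fun j _ => mul_left_comm _ _ _
      _ < 0 := mul_neg_of_pos_of_neg (div_pos (hw i) (hv i)) hFv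
  exact neg_of_mul_neg_left hχw (hw i).le
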